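/- Let 𝕂 be ℝ or ℂ, let 0 < q ≤ s < ∞ and 0 < p_1, …, p_n < ∞, and let E_1, …, E_n, F be Banach spaces over 𝕂. If a continuous n-linear operator T : E_1 × ⋯ × E_n → F is multiple (s,q;p_1,…,p_n)-mixing summing and q < p_k for some k ∈ {1,…,n}, then T = 0. -/

import Mathlib

open scoped BigOperators
noncomputable section

/-- The weak `ℓ^q` norm of a finite family in a normed space:
`sup_{‖φ‖ ≤ 1} (∑_j |φ(x_j)|^q)^{1/q}`. -/
def weakLpNorm (𝕂 : Type*) [RCLike 𝕂] {E : Type*} [NormedAddCommGroup E] [NormedSpace 𝕂 E]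
    {J : Type*} [Fintype J] (q : ℝ) (x : J → E) : ℝ :=
  ⨆ φ : {φ : E →L[𝕂] 𝕂 // ‖φ‖ ≤ 1}, (∑ j, ‖φ.1 (x j)‖ ^ q) ^ (1 / q)

/-- The mixed `(s,q)`-norm of a finite family `z` in `F`:
`inf ‖(τ_j)‖_{ℓ^ρ} ‖(y_j)‖_{w,s}` over factorizations `z_j = τ_j • y_j`, where
`1/ρ = 1/q - 1/s` (so `ρ = ∞`, i.e. the sup norm, when `s = q`). -/
def mixedNorm (𝕂 : Type*) [RCLike 𝕂] {F : Type*} [NormedAddCommGroup F] [NormedSpace 𝕂 F]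
    {J : Type*} [Fintype J] (s q : ℝ) (z : J → F) : ℝ :=
  sInf { c : ℝ | ∃ τ : J → 𝕂, ∃ y : J → F, (∀ j, z j = τ j • y j) ∧
      c = (if s = q then ⨆ j, ‖τ j‖
           else (∑ j, ‖τ j‖ ^ (1 / q - 1 / s)⁻¹) ^ (1 / q - 1 / s)) * weakLpNorm 𝕂 s y }

/-- `A` is multiple `(s,q;p₁,…,pₙ)`-mixing summing. -/
def MultipleMixingSumming (𝕂 : Type*) [RCLike 𝕂] {n : ℕ} {E : Fin n → Type*}
    [∀ i, NormedAddCommGroup (E i)] [∀ i, NormedSpace 𝕂 (E i)]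
    {F : Type*} [NormedAddCommGroup F] [NormedSpace 𝕂 F]
    (s q : ℝ) (p : Fin n → ℝ) (A : ((i : Fin n) → E i) → F) : Prop :=
  ∃ σ : ℝ, 0 ≤ σ ∧ ∀ (m : ℕ) (x : (i : Fin n) → Fin m → E i),
    mixedNorm 𝕂 s q (fun j : Fin n → Fin m => A (fun i => x i (j i))) ≤
      σ * ∏ i, weakLpNorm 𝕂 (p i) (x i)

/-- The multiple `(s,q;p₁,…,pₙ)`-mixing summing norm of `A`. -/
def mixingNorm (𝕂 : Type*) [RCLike 𝕂] {n : ℕ} {E : Fin n → Type*}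
    [∀ i, NormedAddCommGroup (E i)] [∀ i, NormedSpace 𝕂 (E i)]
    {F : Type*} [NormedAddCommGroup F] [NormedSpace 𝕂 F]
    (s q : ℝ) (p : Fin n → ℝ) (A : ((i : Fin n) → E i) → F) : ℝ :=
  sInf { σ : ℝ | 0 ≤ σ ∧ ∀ (m : ℕ) (x : (i : Fin n) → Fin m → E i),
    mixedNorm 𝕂 s q (fun j : Fin n → Fin m => A (fun i => x i (j i))) ≤
      σ * ∏ i, weakLpNorm 𝕂 (p i) (x i) }

/-!
Fix `x` and `k` with `q < p k`, and feed `T` the families with `N` copies of `x k` in slot `k`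
and `x i` followed by zeros in every other slot. Their weak `ℓ^{p i}` norms multiply to at most
`N ^ (1 / p k) * ∏ i, ‖x i‖`. The output family contains `T x` at least `N` times, so its weak
`ℓ^q` norm, which by Hölder's inequality is dominated by its mixed `(s,q)` norm, is at least
`N ^ (1 / q) * ‖T x‖`. Letting `N → ∞` forces `T x = 0`.
-/

open Finset Filter Topology

section WeakLpNorm

variable {𝕂 : Type*} [RCLike 𝕂] {E : Type*} [NormedAddCommGroup E] [NormedSpace 𝕂 E]
  {J : Type*} [Fintype J] {q : ℝ}

lemma weakLpNorm_nonneg (x : J → E) : 0 ≤ weakLpNorm 𝕂 q x :=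
  Real.iSup_nonneg fun _ => by positivity

lemma weakLpNorm_le_of_forall {x : J → E} {B : ℝ}
    (h : ∀ φ : E →L[𝕂] 𝕂, ‖φ‖ ≤ 1 → (∑ j, ‖φ (x j)‖ ^ q) ^ (1 / q) ≤ B) :
    weakLpNorm 𝕂 q x ≤ B :=
  have : Nonempty {φ : E →L[𝕂] 𝕂 // ‖φ‖ ≤ 1} := ⟨⟨0, by simp⟩⟩
  ciSup_le fun φ => h φ.1 φ.2

lemma rpow_sum_norm_apply_le (hq : 0 < q) (x : J → E) {φ : E →L[𝕂] 𝕂} (hφ : ‖φ‖ ≤ 1) :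
    (∑ j, ‖φ (x j)‖ ^ q) ^ (1 / q) ≤ (∑ j, ‖x j‖ ^ q) ^ (1 / q) := by
  gcongr with j
  exact φ.le_of_opNorm_le hφ (x j) |>.trans_eq (one_mul _)

lemma weakLpNorm_le_lpNorm (hq : 0 < q) (x : J → E) :
    weakLpNorm 𝕂 q x ≤ (∑ j, ‖x j‖ ^ q) ^ (1 / q) :=
  weakLpNorm_le_of_forall fun _ hφ => rpow_sum_norm_apply_le hq x hφ

lemma le_weakLpNorm (hq : 0 < q) (x : J → E) {φ : E →L[𝕂] 𝕂} (hφ : ‖φ‖ ≤ 1) :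
    (∑ j, ‖φ (x j)‖ ^ q) ^ (1 / q) ≤ weakLpNorm 𝕂 q x := by
  refine le_ciSup (f := fun ψ : {φ : E →L[𝕂] 𝕂 // ‖φ‖ ≤ 1} => (∑ j, ‖ψ.1 (x j)‖ ^ q) ^ (1 / q))
    ⟨(∑ j, ‖x j‖ ^ q) ^ (1 / q), ?_⟩ ⟨φ, hφ⟩
  rintro _ ⟨ψ, rfl⟩
  exact rpow_sum_norm_apply_le hq x ψ.2

lemma weakLpNorm_comp_le {I : Type*} [Fintype I] (hq : 0 < q) (x : J → E) {e : I → J}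
    (he : Function.Injective e) : weakLpNorm 𝕂 q (x ∘ e) ≤ weakLpNorm 𝕂 q x := by
  refine weakLpNorm_le_of_forall fun φ hφ => le_trans ?_ (le_weakLpNorm hq x hφ)
  gcongr
  exact (sum_map univ ⟨e, he⟩ fun j => ‖φ (x j)‖ ^ q).symm.le.trans <|
    sum_le_sum_of_subset_of_nonneg (subset_univ _) fun _ _ _ => by positivity

lemma weakLpNorm_const (hq : 0 < q) (v : E) :
    weakLpNorm 𝕂 q (fun _ : J => v) = (Fintype.card J : ℝ) ^ (1 / q) * ‖v‖ := by
  have hcard : (∑ _j : J, ‖v‖ ^ q) ^ (1 / q) = (Fintype.card J : ℝ) ^ (1 / q) * ‖v‖ := by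
    rw [sum_const, card_univ, nsmul_eq_mul, Real.mul_rpow (by positivity) (by positivity),
      one_div, Real.rpow_rpow_inv (norm_nonneg v) hq.ne']
  refine le_antisymm ((weakLpNorm_le_lpNorm hq _).trans_eq hcard) ?_
  obtain ⟨φ, hφ, hφv⟩ := exists_dual_vector'' 𝕂 v
  refine le_trans (le_of_eq ?_) (le_weakLpNorm hq _ hφ)
  rw [← hcard, hφv, RCLike.norm_ofReal, abs_norm]

lemma weakLpNorm_pi_single_le [DecidableEq J] (hq : 0 < q) (j₀ : J) (v : E) :
    weakLpNorm 𝕂 q (Pi.single j₀ v) ≤ ‖v‖ := by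
  refine (weakLpNorm_le_lpNorm hq _).trans_eq ?_
  rw [sum_eq_single j₀ (fun j _ hj => by simp [hj, Real.zero_rpow hq.ne']) (by simp)]
  simp [Real.rpow_rpow_inv (norm_nonneg v) hq.ne']

end WeakLpNorm

section MixedNorm

variable {𝕂 : Type*} [RCLike 𝕂] {J : Type*} [Fintype J] {s q : ℝ}

/-- `‖τ‖_{ℓ^ρ}` with `1/ρ = 1/q - 1/s`: the scalar factor in the definition of `mixedNorm`. -/
def mixedWeight (s q : ℝ) (τ : J → 𝕂) : ℝ :=
  if s = q then ⨆ j, ‖τ j‖ else (∑ j, ‖τ j‖ ^ (1 / q - 1 / s)⁻¹) ^ (1 / q - 1 / s)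

lemma rpow_sum_mul_rpow_le_iSup_mul (hq : 0 < q) {a b : J → ℝ} (ha : 0 ≤ a) (hb : 0 ≤ b) :
    (∑ j, (a j * b j) ^ q) ^ (1 / q) ≤ (⨆ j, a j) * (∑ j, b j ^ q) ^ (1 / q) := by
  have hM : 0 ≤ ⨆ j, a j := Real.iSup_nonneg ha
  calc (∑ j, (a j * b j) ^ q) ^ (1 / q) ≤ (∑ j, ((⨆ j, a j) * b j) ^ q) ^ (1 / q) := by
        have hab := fun j => mul_nonneg (ha j) (hb j)
        gcongr with j
        · exact sum_nonneg fun j _ => Real.rpow_nonneg (hab j) q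
        · exact hab j
        · exact hb j
        · exact le_ciSup (Set.finite_range a).bddAbove j
    _ = (⨆ j, a j) * (∑ j, b j ^ q) ^ (1 / q) := by
        simp_rw [Real.mul_rpow hM (hb _), ← mul_sum]
        rw [Real.mul_rpow (Real.rpow_nonneg hM q)
          (sum_nonneg fun j _ => Real.rpow_nonneg (hb j) q), one_div, Real.rpow_rpow_inv hM hq.ne']

lemma rpow_sum_mul_rpow_le_holder (hq : 0 < q) (hqs : q < s) {a b : J → ℝ} (ha : 0 ≤ a)
    (hb : 0 ≤ b) :
    (∑ j, (a j * b j) ^ q) ^ (1 / q) ≤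
      (∑ j, a j ^ (1 / q - 1 / s)⁻¹) ^ (1 / q - 1 / s) * (∑ j, b j ^ s) ^ (1 / s) := by
  have hρ : 0 < 1 / q - 1 / s := sub_pos.2 (one_div_lt_one_div_of_lt hq hqs)
  have htriple : (1 / q - 1 / s)⁻¹.HolderTriple s q :=
    ⟨by rw [inv_inv]; field_simp; ring, inv_pos.2 hρ, hq.trans hqs⟩
  lift a to J → NNReal using ha
  lift b to J → NNReal using hb
  have := NNReal.Lr_le_Lp_mul_Lq univ a b htriple
  rw [one_div (1 / q - 1 / s)⁻¹, inv_inv] at this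
  beta_reduce
  exact_mod_cast this

lemma weakLpNorm_smul_le {F : Type*} [NormedAddCommGroup F] [NormedSpace 𝕂 F] (hq : 0 < q)
    (hqs : q ≤ s) (τ : J → 𝕂) (y : J → F) :
    weakLpNorm 𝕂 q (fun j => τ j • y j) ≤ mixedWeight s q τ * weakLpNorm 𝕂 s y := by
  refine weakLpNorm_le_of_forall fun φ hφ => ?_
  simp only [map_smul, smul_eq_mul, norm_mul]
  have ha : (0 : J → ℝ) ≤ fun j => ‖τ j‖ := fun _ => norm_nonneg _
  have hb : (0 : J → ℝ) ≤ fun j => ‖φ (y j)‖ := fun _ => norm_nonneg _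
  unfold mixedWeight
  split_ifs with hsq
  · subst hsq
    refine (rpow_sum_mul_rpow_le_iSup_mul hq ha hb).trans ?_
    gcongr
    · exact Real.iSup_nonneg ha
    · exact le_weakLpNorm hq y hφ
  · refine (rpow_sum_mul_rpow_le_holder hq (hqs.lt_of_ne (Ne.symm hsq)) ha hb).trans ?_
    gcongr
    exact le_weakLpNorm (hq.trans_le hqs) y hφ

lemma weakLpNorm_le_mixedNorm {F : Type*} [NormedAddCommGroup F] [NormedSpace 𝕂 F]
    (hq : 0 < q) (hqs : q ≤ s) (z : J → F) : weakLpNorm 𝕂 q z ≤ mixedNorm 𝕂 s q z := by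
  refine le_csInf ⟨_, fun _ => 1, z, fun j => (one_smul 𝕂 (z j)).symm, rfl⟩ ?_
  rintro c ⟨τ, y, hzy, rfl⟩
  rw [show z = fun j => τ j • y j from funext hzy]
  exact weakLpNorm_smul_le hq hqs τ y

end MixedNorm

lemma nonpos_of_natCast_rpow_mul_le {a C α β : ℝ} (hβα : β < α)
    (h : ∀ N : ℕ, 0 < N → (N : ℝ) ^ α * a ≤ C * (N : ℝ) ^ β) : a ≤ 0 := by
  have hlim : Tendsto (fun N : ℕ => C * (N : ℝ) ^ (β - α)) atTop (𝓝 0) := by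
    have := (tendsto_rpow_neg_atTop (sub_pos.2 hβα)).comp tendsto_natCast_atTop_atTop
    simpa [Function.comp_def] using this.const_mul C
  refine ge_of_tendsto hlim <| (eventually_gt_atTop 0).mono fun N hN => ?_
  have hNα : 0 < (N : ℝ) ^ α := by positivity
  rw [Real.rpow_sub (by positivity), mul_div_assoc', le_div_iff₀ hNα, mul_comm]
  exact h N hN

section Mixing

variable {𝕂 : Type*} [RCLike 𝕂] {n : ℕ} {E : Fin n → Type*} [∀ i, NormedAddCommGroup (E i)]
  [∀ i, NormedSpace 𝕂 (E i)] {F : Type*} [NormedAddCommGroup F] [NormedSpace 𝕂 F]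
  {s q σ : ℝ} {p : Fin n → ℝ} {A : ((i : Fin n) → E i) → F}

lemma natCast_rpow_mul_norm_le (hq : 0 < q) (hqs : q ≤ s) (hp : ∀ i, 0 < p i) (hσ0 : 0 ≤ σ)
    (hσ : ∀ (m : ℕ) (x : (i : Fin n) → Fin m → E i),
      mixedNorm 𝕂 s q (fun j : Fin n → Fin m => A (fun i => x i (j i))) ≤
        σ * ∏ i, weakLpNorm 𝕂 (p i) (x i))
    (k : Fin n) (x : (i : Fin n) → E i) (N : ℕ) [NeZero N] :
    (N : ℝ) ^ (1 / q) * ‖A x‖ ≤ σ * (∏ i, ‖x i‖) * (N : ℝ) ^ (1 / p k) := by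
  let X : (i : Fin n) → Fin N → E i := fun i => if i = k then fun _ => x i else Pi.single 0 (x i)
  let Z : (Fin n → Fin N) → F := fun j => A (fun i => X i (j i))
  let e : Fin N → Fin n → Fin N := Pi.single (M := fun _ => Fin N) k
  have hZ : Z ∘ e = fun _ => A x := by
    funext l
    show A _ = A x
    congr 1
    funext i
    by_cases hik : i = k
    · subst hik; simp [X, e]
    · simp [X, e, hik]
  have hX : ∀ i,
      weakLpNorm 𝕂 (p i) (X i) ≤ (if i = k then (N : ℝ) ^ (1 / p k) else 1) * ‖x i‖ := by
    intro i
    by_cases hik : i = k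
    · subst hik; simp [X, weakLpNorm_const (hp i)]
    · simpa [X, hik] using weakLpNorm_pi_single_le (𝕂 := 𝕂) (hp i) 0 (x i)
  calc (N : ℝ) ^ (1 / q) * ‖A x‖ = weakLpNorm 𝕂 q (Z ∘ e) := by
        rw [hZ, weakLpNorm_const hq, Fintype.card_fin]
    _ ≤ weakLpNorm 𝕂 q Z := weakLpNorm_comp_le hq Z (Pi.single_injective k)
    _ ≤ mixedNorm 𝕂 s q Z := weakLpNorm_le_mixedNorm hq hqs Z
    _ ≤ σ * ∏ i, weakLpNorm 𝕂 (p i) (X i) := hσ N X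
    _ ≤ σ * ∏ i, (if i = k then (N : ℝ) ^ (1 / p k) else 1) * ‖x i‖ := by
        gcongr with i
        · exact fun i _ => weakLpNorm_nonneg _
        · exact hX i
    _ = σ * (∏ i, ‖x i‖) * (N : ℝ) ^ (1 / p k) := by
        rw [prod_mul_distrib, prod_ite_eq' univ k]
        simp only [mem_univ, if_true]
        ring

theorem MultipleMixingSumming.apply_eq_zero (hq : 0 < q) (hqs : q ≤ s) (hp : ∀ i, 0 < p i)
    (hA : MultipleMixingSumming 𝕂 s q p A) {k : Fin n} (hk : q < p k) (x : (i : Fin n) → E i) :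
    A x = 0 := by
  obtain ⟨σ, hσ0, hσ⟩ := hA
  refine norm_le_zero_iff.1 <| nonpos_of_natCast_rpow_mul_le (C := σ * ∏ i, ‖x i‖)
    (one_div_lt_one_div_of_lt hq hk) fun N hN => ?_
  have : NeZero N := ⟨hN.ne'⟩
  exact natCast_rpow_mul_norm_le hq hqs hp hσ0 hσ k x N

end Mixing

theorem multipleMixingSumming_eq_zero_of_lt_general
    {𝕂 : Type*} [RCLike 𝕂] {n : ℕ}
    (s q : ℝ) (p : Fin n → ℝ) (hq : 0 < q) (hqs : q ≤ s) (hp : ∀ k, 0 < p k)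
    (E : Fin n → Type*) [∀ i, NormedAddCommGroup (E i)] [∀ i, NormedSpace 𝕂 (E i)]
    (F : Type*) [NormedAddCommGroup F] [NormedSpace 𝕂 F]
    (T : ContinuousMultilinearMap 𝕂 E F)
    (hT : MultipleMixingSumming 𝕂 s q p (⇑T))
    (hk : ∃ k : Fin n, q < p k) :
    T = 0 := by
  obtain ⟨k, hk⟩ := hk
  ext x
  exact hT.apply_eq_zero hq hqs hp hk x

/-- if `T` is multiple `(s,q;p₁,…,pₙ)`-mixing summing and `q < pₖ`
for some `k`, then `T = 0`. -/
theorem multipleMixingSumming_eq_zero_of_lt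
    {𝕂 : Type*} [RCLike 𝕂] {n : ℕ} (hn : 1 ≤ n)
    (s q : ℝ) (p : Fin n → ℝ) (hq : 0 < q) (hqs : q ≤ s) (hp : ∀ k, 0 < p k)
    (E : Fin n → Type*) [∀ i, NormedAddCommGroup (E i)] [∀ i, NormedSpace 𝕂 (E i)]
    [∀ i, CompleteSpace (E i)]
    (F : Type*) [NormedAddCommGroup F] [NormedSpace 𝕂 F] [CompleteSpace F]
    (T : ContinuousMultilinearMap 𝕂 E F)
    (hT : MultipleMixingSumming 𝕂 s q p (⇑T))
    (hk : ∃ k : Fin n, q < p k) :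
    T = 0 :=
  multipleMixingSumming_eq_zero_of_lt_general s q p hq hqs hp E F T hT hk
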